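/- arXiv:1212.1524 — 2 statements merged into one kernel-verified Lean document; each statement's English description precedes it below -/
import Mathlib

section
/- Let θ̂_I be the BOLL (maximizer of the BLM upper bound) with associated best latent marginal q̂_D, and let θ_J be any top-layer parameter. Then the loss of log-likelihood performance of (θ̂_I, θ_J) relative to the global in-model optimum (θ*_I, θ*_J) is at most KL(P_D(x) ‖ P_{θ̂_I,θ_J}(x)) − KL(P_D(x) ‖ q̂_{D,θ̂_I}(x)), where q̂_{D,θ̂_I}(x) = Σ_h P_{θ̂_I}(x|h) q̂_D(h) and P_{θ̂_I,θ_J}(x) = Σ_h P_{θ̂_I}(x|h) P_{θ_J}(h). -/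
open Finset

/-! The best latent marginal criterion dominates the log-likelihood of every two-layer model
sharing a bottom layer, in particular of the global optimum: its top layer `P_{θ*_J}` is one of
the latent marginals `Q` the criterion maximises over. So the loss of `(θ̂_I, θ_J)` is at most
the gap between the log-likelihoods of `q̂_{D,θ̂_I}` and `P_{θ̂_I,θ_J}`, and this gap is the
difference of the two KL divergences because the entropy term of `P_D` cancels. -/

theorem sum_mul_log_div_eq_sub {α : Type*} [Fintype α] {p a : α → ℝ}
    (ha : ∀ x, p x ≠ 0 → 0 < a x) :
    ∑ x, p x * Real.log (p x / a x) = ∑ x, p x * Real.log (p x) - ∑ x, p x * Real.log (a x) := by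
  rw [← sum_sub_distrib]
  refine sum_congr rfl fun x _ => ?_
  by_cases hp : p x = 0
  · simp [hp]
  · rw [Real.log_div hp (ha x hp).ne', mul_sub]

theorem sum_mul_log_div_sub_sum_mul_log_div {α : Type*} [Fintype α] {p a b : α → ℝ}
    (ha : ∀ x, p x ≠ 0 → 0 < a x) (hb : ∀ x, p x ≠ 0 → 0 < b x) :
    ∑ x, p x * Real.log (p x / a x) - ∑ x, p x * Real.log (p x / b x)
      = ∑ x, p x * Real.log (b x) - ∑ x, p x * Real.log (a x) := by
  rw [sum_mul_log_div_eq_sub ha, sum_mul_log_div_eq_sub hb]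
  ring

theorem boll_loss_bound_general
    {X H ΘI ΘJ : Type} [Fintype X] [Fintype H]
    (PD : X → ℝ)
    (Pgen : ΘI → H → X → ℝ)
    (Ptop : ΘJ → H → ℝ)
    (htop0 : ∀ θJ h, 0 ≤ Ptop θJ h) (htop1 : ∀ θJ, ∑ h : H, Ptop θJ h = 1)
    (θhat : ΘI) (qhatD : H → ℝ)
    -- θ̂_I is the BOLL with best latent marginal q̂_D :
    (hBLM : ∀ (θI : ΘI) (Q : H → ℝ), (∀ h, 0 ≤ Q h) → (∑ h : H, Q h = 1) →
      (∑ x : X, PD x * Real.log (∑ h : H, Pgen θI h x * Q h))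
        ≤ ∑ x : X, PD x * Real.log (∑ h : H, Pgen θhat h x * qhatD h))
    (θstarI : ΘI) (θstarJ : ΘJ)
    (θJ : ΘJ)
    -- positivity so that KL divergences are finite :
    (hpos1 : ∀ x, PD x ≠ 0 → 0 < ∑ h : H, Pgen θhat h x * Ptop θJ h)
    (hpos3 : ∀ x, PD x ≠ 0 → 0 < ∑ h : H, Pgen θhat h x * qhatD h) :
    (∑ x : X, PD x * Real.log (∑ h : H, Pgen θstarI h x * Ptop θstarJ h))
      - (∑ x : X, PD x * Real.log (∑ h : H, Pgen θhat h x * Ptop θJ h))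
      ≤
    (∑ x : X, PD x * Real.log (PD x / (∑ h : H, Pgen θhat h x * Ptop θJ h)))
      - (∑ x : X, PD x * Real.log (PD x / (∑ h : H, Pgen θhat h x * qhatD h))) := by
  rw [sum_mul_log_div_sub_sum_mul_log_div hpos1 hpos3]
  exact sub_le_sub_right (hBLM θstarI (Ptop θstarJ) (htop0 θstarJ) (htop1 θstarJ)) _

/-- Performance loss of (θ̂_I, θ_J) relative to the global optimum is at most
KL(P_D ‖ P_{θ̂_I,θ_J}) − KL(P_D ‖ q̂_{D,θ̂_I}). -/
theorem boll_loss_bound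
    {X H ΘI ΘJ : Type} [Fintype X] [Fintype H]
    (PD : X → ℝ) (hPD0 : ∀ x, 0 ≤ PD x) (hPD1 : ∑ x : X, PD x = 1)
    (Pgen : ΘI → H → X → ℝ)
    (hgen0 : ∀ θI h x, 0 ≤ Pgen θI h x) (hgen1 : ∀ θI h, ∑ x : X, Pgen θI h x = 1)
    (Ptop : ΘJ → H → ℝ)
    (htop0 : ∀ θJ h, 0 ≤ Ptop θJ h) (htop1 : ∀ θJ, ∑ h : H, Ptop θJ h = 1)
    (θhat : ΘI) (qhatD : H → ℝ)
    (hq0 : ∀ h, 0 ≤ qhatD h) (hq1 : ∑ h : H, qhatD h = 1)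
    -- θ̂_I is the BOLL with best latent marginal q̂_D :
    (hBLM : ∀ (θI : ΘI) (Q : H → ℝ), (∀ h, 0 ≤ Q h) → (∑ h : H, Q h = 1) →
      (∑ x : X, PD x * Real.log (∑ h : H, Pgen θI h x * Q h))
        ≤ ∑ x : X, PD x * Real.log (∑ h : H, Pgen θhat h x * qhatD h))
    (θstarI : ΘI) (θstarJ : ΘJ)
    -- (θ*_I, θ*_J) is the global in-model optimum :
    (hstar : ∀ (θI : ΘI) (θJ : ΘJ),
      (∑ x : X, PD x * Real.log (∑ h : H, Pgen θI h x * Ptop θJ h))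
        ≤ ∑ x : X, PD x * Real.log (∑ h : H, Pgen θstarI h x * Ptop θstarJ h))
    (θJ : ΘJ)
    -- positivity so that KL divergences are finite :
    (hpos1 : ∀ x, PD x ≠ 0 → 0 < ∑ h : H, Pgen θhat h x * Ptop θJ h)
    (hpos3 : ∀ x, PD x ≠ 0 → 0 < ∑ h : H, Pgen θhat h x * qhatD h) :
    (∑ x : X, PD x * Real.log (∑ h : H, Pgen θstarI h x * Ptop θstarJ h))
      - (∑ x : X, PD x * Real.log (∑ h : H, Pgen θhat h x * Ptop θJ h))
      ≤
    (∑ x : X, PD x * Real.log (PD x / (∑ h : H, Pgen θhat h x * Ptop θJ h)))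
      - (∑ x : X, PD x * Real.log (PD x / (∑ h : H, Pgen θhat h x * qhatD h))) :=
  boll_loss_bound_general PD Pgen Ptop htop0 htop1 θhat qhatD hBLM θstarI θstarJ θJ hpos1 hpos3
end

section
/- Combining the two bounds of Proposition 6: for the BOLL θ̂_I with BLM q̂_D (a fixed point of data incorporation), and any top-layer distribution P_{θ_J}(h), the global performance gap satisfies E_{x~P_D}[log P_{θ*_I,θ*_J}(x)] − E_{x~P_D}[log P_{θ̂_I,θ_J}(x)] ≤ KL(q̂_D(h) ‖ P_{θ_J}(h)). -/
/-!
The BLM bound dominates the global optimum, so it suffices to compare the mixtures with top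
layers `q̂_D` and `P_{θ_J}` under the same generative layer `θ̂_I`. Pointwise in `x`, the
difference of their log-likelihoods is at most the posterior-weighted log ratio
`∑ h, q̂(h | x) log (q̂_D h / P_{θ_J} h)`, the slack being a Gibbs divergence between the two
posteriors. Averaging the posteriors over `P_D` gives back `q̂_D` by the fixed-point property,
so the bound becomes `KL(q̂_D ‖ P_{θ_J})`.
-/

open Finset

namespace BOLL

variable {H : Type} [Fintype H]

lemma sub_le_mul_log_div {p u : ℝ} (hp : 0 ≤ p) (hu : 0 ≤ u) (hpu : 0 < p → 0 < u) :
    p - u ≤ p * Real.log (p / u) := by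
  rcases hp.eq_or_lt with rfl | hp
  · simpa using hu
  have hu := hpu hp
  calc p - u = p * (1 - (p / u)⁻¹) := by field_simp
    _ ≤ p * Real.log (p / u) :=
      mul_le_mul_of_nonneg_left (Real.one_sub_inv_le_log_of_pos (by positivity)) hp.le

/-- Gibbs' inequality, for nonnegative weights that need not be normalized. -/
lemma sum_sub_sum_le_sum_mul_log_div (p u : H → ℝ) (hp : ∀ h, 0 ≤ p h) (hu : ∀ h, 0 ≤ u h)
    (hpu : ∀ h, 0 < p h → 0 < u h) :
    ∑ h, p h - ∑ h, u h ≤ ∑ h, p h * Real.log (p h / u h) := by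
  rw [← sum_sub_distrib]
  exact sum_le_sum fun h _ => sub_le_mul_log_div (hp h) (hu h) (hpu h)

noncomputable def posterior (a q : H → ℝ) (h : H) : ℝ :=
  a h * q h / ∑ h', a h' * q h'

lemma posterior_nonneg {a q : H → ℝ} (ha : ∀ h, 0 ≤ a h) (hq : ∀ h, 0 ≤ q h) (h : H) :
    0 ≤ posterior a q h :=
  div_nonneg (mul_nonneg (ha h) (hq h)) (sum_nonneg fun h' _ => mul_nonneg (ha h') (hq h'))

lemma sum_posterior_eq_one {a q : H → ℝ} (hS : 0 < ∑ h, a h * q h) :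
    ∑ h, posterior a q h = 1 := by
  simp only [posterior]
  rw [← sum_div, div_self hS.ne']

lemma posterior_mul_log_posterior_div {a q P : H → ℝ} (hq : ∀ h, 0 ≤ q h)
    (hsupp : ∀ h, 0 < q h → 0 < P h)
    (hSq : 0 < ∑ h, a h * q h) (hSP : 0 < ∑ h, a h * P h) (h : H) :
    posterior a q h * Real.log (posterior a q h / posterior a P h)
      = posterior a q h * (Real.log (q h / P h)
          - (Real.log (∑ h, a h * q h) - Real.log (∑ h, a h * P h))) := by
  rcases eq_or_ne (posterior a q h) 0 with hpost | hpost
  · rw [hpost, zero_mul, zero_mul]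
  have haq : a h * q h ≠ 0 := by simpa [posterior, hSq.ne'] using hpost
  have hPh : 0 < P h := hsupp h ((hq h).lt_of_ne (right_ne_zero_of_mul haq).symm)
  have hratio : posterior a q h / posterior a P h
      = (q h / P h) / ((∑ h, a h * q h) / ∑ h, a h * P h) := by
    simp only [posterior]
    field_simp [left_ne_zero_of_mul haq]
  rw [hratio, Real.log_div (div_ne_zero (right_ne_zero_of_mul haq) hPh.ne')
    (div_ne_zero hSq.ne' hSP.ne'), Real.log_div hSq.ne' hSP.ne']

lemma log_sum_mul_sub_log_sum_mul_le {a q P : H → ℝ} (ha : ∀ h, 0 ≤ a h) (hq : ∀ h, 0 ≤ q h)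
    (hP : ∀ h, 0 ≤ P h) (hsupp : ∀ h, 0 < q h → 0 < P h)
    (hSq : 0 < ∑ h, a h * q h) (hSP : 0 < ∑ h, a h * P h) :
    Real.log (∑ h, a h * q h) - Real.log (∑ h, a h * P h)
      ≤ ∑ h, posterior a q h * Real.log (q h / P h) := by
  have hgibbs := sum_sub_sum_le_sum_mul_log_div (posterior a q) (posterior a P)
    (posterior_nonneg ha hq) (posterior_nonneg ha hP) fun h hpos => by
      have hP_pos := hsupp h ((hq h).lt_of_ne fun h0 => by simp [posterior, ← h0] at hpos)
      have ha_pos : 0 < a h := (ha h).lt_of_ne fun h0 => by simp [posterior, ← h0] at hpos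
      exact div_pos (mul_pos ha_pos hP_pos) hSP
  simp only [sum_posterior_eq_one hSq, sum_posterior_eq_one hSP, sub_self,
    posterior_mul_log_posterior_div hq hsupp hSq hSP, mul_sub, sum_sub_distrib,
    ← sum_mul, one_mul] at hgibbs
  linarith

end BOLL

open BOLL in
theorem boll_loss_bound_KL_general
    {X H ΘI ΘJ : Type} [Fintype X] [Fintype H]
    (PD : X → ℝ) (hPD0 : ∀ x, 0 ≤ PD x)
    (Pgen : ΘI → H → X → ℝ)
    (hgen0 : ∀ θI h x, 0 ≤ Pgen θI h x)
    (Ptop : ΘJ → H → ℝ)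
    (htop0 : ∀ θJ h, 0 ≤ Ptop θJ h) (htop1 : ∀ θJ, ∑ h : H, Ptop θJ h = 1)
    (θhat : ΘI) (qhatD : H → ℝ)
    (hq0 : ∀ h, 0 ≤ qhatD h)
    -- θ̂_I is the BOLL with best latent marginal q̂_D :
    (hBLM : ∀ (θI : ΘI) (Q : H → ℝ), (∀ h, 0 ≤ Q h) → (∑ h : H, Q h = 1) →
      (∑ x : X, PD x * Real.log (∑ h : H, Pgen θI h x * Q h))
        ≤ ∑ x : X, PD x * Real.log (∑ h : H, Pgen θhat h x * qhatD h))
    -- q̂_D is a fixed point of data incorporation for θ̂_I :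
    (hfix : ∀ h, qhatD h =
      ∑ x : X, (Pgen θhat h x * qhatD h / (∑ h' : H, Pgen θhat h' x * qhatD h'))
          * PD x)
    (θstarI : ΘI) (θstarJ : ΘJ)
    (θJ : ΘJ)
    (hsupp : ∀ h, 0 < qhatD h → 0 < Ptop θJ h)
    (hpos1 : ∀ x, PD x ≠ 0 → 0 < ∑ h : H, Pgen θhat h x * Ptop θJ h)
    (hpos3 : ∀ x, PD x ≠ 0 → 0 < ∑ h : H, Pgen θhat h x * qhatD h) :
    (∑ x : X, PD x * Real.log (∑ h : H, Pgen θstarI h x * Ptop θstarJ h))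
      - (∑ x : X, PD x * Real.log (∑ h : H, Pgen θhat h x * Ptop θJ h))
      ≤
    ∑ h : H, qhatD h * Real.log (qhatD h / Ptop θJ h) := by
  set L := fun h => Real.log (qhatD h / Ptop θJ h)
  calc _ ≤ (∑ x, PD x * Real.log (∑ h, Pgen θhat h x * qhatD h))
        - ∑ x, PD x * Real.log (∑ h, Pgen θhat h x * Ptop θJ h) :=
        sub_le_sub_right (hBLM θstarI _ (htop0 θstarJ) (htop1 θstarJ)) _
    _ = ∑ x, PD x * (Real.log (∑ h, Pgen θhat h x * qhatD h)
          - Real.log (∑ h, Pgen θhat h x * Ptop θJ h)) := by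
        simp only [mul_sub, sum_sub_distrib]
    _ ≤ ∑ x, PD x * ∑ h, posterior (Pgen θhat · x) qhatD h * L h := by
        refine sum_le_sum fun x _ => ?_
        rcases eq_or_ne (PD x) 0 with hx | hx
        · simp [hx]
        exact mul_le_mul_of_nonneg_left (log_sum_mul_sub_log_sum_mul_le (hgen0 θhat · x) hq0
          (htop0 θJ) hsupp (hpos3 x hx) (hpos1 x hx)) (hPD0 x)
    _ = ∑ h, (∑ x, posterior (Pgen θhat · x) qhatD h * PD x) * L h := by
        simp only [mul_sum, sum_mul]
        rw [sum_comm]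
        exact sum_congr rfl fun h _ => sum_congr rfl fun x _ => by ring
    _ = ∑ h, qhatD h * L h := by
        simp only [posterior, ← hfix]

/-- Global performance gap of (θ̂_I, θ_J) relative to the global optimum is at most
KL(q̂_D ‖ P_{θ_J}). -/
theorem boll_loss_bound_KL
    {X H ΘI ΘJ : Type} [Fintype X] [Fintype H]
    (PD : X → ℝ) (hPD0 : ∀ x, 0 ≤ PD x) (hPD1 : ∑ x : X, PD x = 1)
    (Pgen : ΘI → H → X → ℝ)
    (hgen0 : ∀ θI h x, 0 ≤ Pgen θI h x) (hgen1 : ∀ θI h, ∑ x : X, Pgen θI h x = 1)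
    (Ptop : ΘJ → H → ℝ)
    (htop0 : ∀ θJ h, 0 ≤ Ptop θJ h) (htop1 : ∀ θJ, ∑ h : H, Ptop θJ h = 1)
    (θhat : ΘI) (qhatD : H → ℝ)
    (hq0 : ∀ h, 0 ≤ qhatD h) (hq1 : ∑ h : H, qhatD h = 1)
    -- θ̂_I is the BOLL with best latent marginal q̂_D :
    (hBLM : ∀ (θI : ΘI) (Q : H → ℝ), (∀ h, 0 ≤ Q h) → (∑ h : H, Q h = 1) →
      (∑ x : X, PD x * Real.log (∑ h : H, Pgen θI h x * Q h))
        ≤ ∑ x : X, PD x * Real.log (∑ h : H, Pgen θhat h x * qhatD h))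
    -- q̂_D is a fixed point of data incorporation for θ̂_I :
    (hfix : ∀ h, qhatD h =
      ∑ x : X, (Pgen θhat h x * qhatD h / (∑ h' : H, Pgen θhat h' x * qhatD h'))
          * PD x)
    (θstarI : ΘI) (θstarJ : ΘJ)
    (hstar : ∀ (θI : ΘI) (θJ : ΘJ),
      (∑ x : X, PD x * Real.log (∑ h : H, Pgen θI h x * Ptop θJ h))
        ≤ ∑ x : X, PD x * Real.log (∑ h : H, Pgen θstarI h x * Ptop θstarJ h))
    (θJ : ΘJ)
    (hsupp : ∀ h, 0 < qhatD h → 0 < Ptop θJ h)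
    (hpos1 : ∀ x, PD x ≠ 0 → 0 < ∑ h : H, Pgen θhat h x * Ptop θJ h)
    (hpos3 : ∀ x, PD x ≠ 0 → 0 < ∑ h : H, Pgen θhat h x * qhatD h) :
    (∑ x : X, PD x * Real.log (∑ h : H, Pgen θstarI h x * Ptop θstarJ h))
      - (∑ x : X, PD x * Real.log (∑ h : H, Pgen θhat h x * Ptop θJ h))
      ≤
    ∑ h : H, qhatD h * Real.log (qhatD h / Ptop θJ h) :=
  boll_loss_bound_KL_general PD hPD0 Pgen hgen0 Ptop htop0 htop1 θhat qhatD hq0 hBLM hfix θstarI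
    θstarJ θJ hsupp hpos1 hpos3
end
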